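/- arXiv:0805.4000 — 2 statements merged into one kernel-verified Lean document; each statement's English description precedes it below -/
import Mathlib

section
/- Let A and B be nontrivial groups of class at most 2 and odd prime exponent p, let H ≤ [A,A], K ≤ [B,B], φ : H → K an isomorphism, and G = A ∐²_φ B the amalgamated coproduct. Then the center of G equals its commutator subgroup: Z(G) = [G,G]. -/
/-- The 2-nilpotent product of `A` and `B`: the free product modulo the third
term of its lower central series. -/
abbrev nilProd2 (A B : Type) [Group A] [Group B] : Type :=
  Monoid.Coprod A B ⧸ (⊤ : Subgroup (Monoid.Coprod A B)).lowerCentralSeries 2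

/-- Canonical map `A → A ∐² B`. -/
def nilProd2.inl (A B : Type) [Group A] [Group B] : A →* nilProd2 A B :=
  (QuotientGroup.mk' _).comp Monoid.Coprod.inl

/-- Canonical map `B → A ∐² B`. -/
def nilProd2.inr (A B : Type) [Group A] [Group B] : B →* nilProd2 A B :=
  (QuotientGroup.mk' _).comp Monoid.Coprod.inr

/-- The (normal, indeed central) subgroup of the 2-nilpotent product generated by
`{ h φ(h)⁻¹ : h ∈ H }`. -/
def amalgamRel (A B : Type) [Group A] [Group B] (H : Subgroup A) (K : Subgroup B)
    (φ : H ≃* K) : Subgroup (nilProd2 A B) :=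
  Subgroup.normalClosure
    {x | ∃ h : H, x = nilProd2.inl A B h * (nilProd2.inr A B (φ h))⁻¹}

instance (A B : Type) [Group A] [Group B] (H : Subgroup A) (K : Subgroup B)
    (φ : H ≃* K) : (amalgamRel A B H K φ).Normal :=
  Subgroup.normalClosure_normal

/-- The amalgamated coproduct `A ∐²_φ B`. -/
abbrev amalgam (A B : Type) [Group A] [Group B] (H : Subgroup A) (K : Subgroup B)
    (φ : H ≃* K) : Type :=
  nilProd2 A B ⧸ amalgamRel A B H K φ

/-- Canonical map `A → A ∐²_φ B`. -/
def amalgam.inl (A B : Type) [Group A] [Group B] (H : Subgroup A) (K : Subgroup B)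
    (φ : H ≃* K) : A →* amalgam A B H K φ :=
  (QuotientGroup.mk' _).comp (nilProd2.inl A B)

/-- Canonical map `B → A ∐²_φ B`. -/
def amalgam.inr (A B : Type) [Group A] [Group B] (H : Subgroup A) (K : Subgroup B)
    (φ : H ≃* K) : B →* amalgam A B H K φ :=
  (QuotientGroup.mk' _).comp (nilProd2.inr A B)

/-- A group is capable if it is a central factor group. -/
def IsCapable (G : Type) [Group G] : Prop :=
  ∃ (E : Type) (_ : Group E), Nonempty ((E ⧸ Subgroup.center E) ≃* G)

/-- The epicentre of `G`: the intersection of the images of the centers over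
all central extensions of `G`. -/
def epicenter (G : Type) [Group G] : Subgroup G :=
  ⨅ (E : Type) (_ : Group E) (ψ : E →* G) (_ : Function.Surjective ψ)
    (_ : ψ.ker ≤ Subgroup.center E), Subgroup.map ψ (Subgroup.center E)

instance (G : Type) [Group G] [Group.FG G] : Group.FG (Abelianization G) :=
  Group.fg_of_surjective (f := Abelianization.of)
    (fun x => Quotient.inductionOn' x (fun g => ⟨g, rfl⟩))


/-! Since `A ∐² B` has class at most 2, so does its quotient `G`, whence `[G,G] ≤ Z(G)`.
Conversely `G/[G,G]` has exponent `p`, so it suffices that every character `χ : G → 𝔽ₚ` kills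
the centre. Characters of `A` and `B` vanish on `H ≤ [A,A]` and `K ≤ [B,B]`, so any pair of them
defines a homomorphism of `G` into the Heisenberg group over `𝔽ₚ`, sending `A` to the first and
`B` to the second axis. Pairing `χ|_A` with a nonzero character of `B` (one exists because a
nontrivial nilpotent group is not perfect) forces the first coordinate of the image of a central
element to vanish; symmetrically for `χ|_B`, and `χ` is the sum of these two coordinates. -/

section ClassTwo

variable {G : Type*} [Group G]

theorem commutator_le_center_iff :
    commutator G ≤ Subgroup.center G ↔ (⊤ : Subgroup G).lowerCentralSeries 2 = ⊥ := by
  rw [Subgroup.lowerCentralSeries_succ, Subgroup.top_lowerCentralSeries_one,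
    Subgroup.commutator_top_right_eq_bot_iff_le_center]

theorem lowerCentralSeries_eq_bot_of_surjective {G' : Type*} [Group G'] {f : G →* G'}
    (hf : Function.Surjective f) {n : ℕ} (h : (⊤ : Subgroup G).lowerCentralSeries n ≤ f.ker) :
    (⊤ : Subgroup G').lowerCentralSeries n = ⊥ := by
  rw [← Subgroup.map_top_of_surjective f hf, ← Subgroup.map_lowerCentralSeries,
    Subgroup.map_eq_bot_iff]
  exact h

theorem lowerCentralSeries_le_ker {P : Type*} [Group P] {n : ℕ}
    (hP : (⊤ : Subgroup P).lowerCentralSeries n = ⊥) (f : G →* P) :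
    (⊤ : Subgroup G).lowerCentralSeries n ≤ f.ker := by
  rw [← Subgroup.map_eq_bot_iff, Subgroup.map_lowerCentralSeries, eq_bot_iff, ← hP]
  exact Subgroup.lowerCentralSeries_mono n le_top

theorem commutator_ne_top_of_lowerCentralSeries_eq_bot [Nontrivial G] {n : ℕ}
    (h : (⊤ : Subgroup G).lowerCentralSeries n = ⊥) : commutator G ≠ ⊤ := by
  intro hperfect
  have hall : ∀ k, (⊤ : Subgroup G).lowerCentralSeries k = ⊤ := by
    intro k
    induction k with
    | zero => rfl
    | succ k ih => rw [Subgroup.lowerCentralSeries_succ, ih, ← commutator_def, hperfect]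
  exact bot_ne_top (h.symm.trans (hall n))

end ClassTwo

section Characters

variable {C : Type*} [Group C]

theorem Abelianization.pow_eq_one_of_closure_eq_top {S : Set C} (hS : Subgroup.closure S = ⊤)
    {n : ℕ} (hSn : ∀ s ∈ S, s ^ n = 1) (y : Abelianization C) : y ^ n = 1 := by
  obtain ⟨c, rfl⟩ := QuotientGroup.mk_surjective y
  have hle : Subgroup.closure S ≤ ((powMonoidHom n).ker.comap Abelianization.of) :=
    (Subgroup.closure_le _).2 fun s hs => by simp [← map_pow, hSn s hs]
  exact hle (hS ▸ Subgroup.mem_top c : c ∈ Subgroup.closure S)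

variable {p : ℕ} [Fact p.Prime]

theorem eq_zero_of_forall_addMonoidHom_zmod {V : Type*} [AddCommGroup V] [Module (ZMod p) V]
    {v : V} (h : ∀ ψ : V →+ ZMod p, ψ v = 0) : v = 0 :=
  (Module.forall_dual_apply_eq_zero_iff (ZMod p) v).1 fun ψ => h ψ.toAddMonoidHom

theorem mem_commutator_iff_forall_char (hexp : ∀ y : Abelianization C, y ^ p = 1) {c : C} :
    c ∈ commutator C ↔ ∀ χ : C →* Multiplicative (ZMod p), χ c = 1 := by
  refine ⟨fun hc χ => Abelianization.commutator_subset_ker χ hc, fun hc => ?_⟩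
  have hsmul (y : Additive (Abelianization C)) : p • y = 0 := by
    rw [← ofMul_toMul y, ← ofMul_pow, hexp, ofMul_one]
  let _ := AddCommGroup.zmodModule hsmul
  have hzero : Additive.ofMul (Abelianization.of c) = 0 :=
    eq_zero_of_forall_addMonoidHom_zmod fun ψ => congrArg Multiplicative.toAdd
      (hc ((AddMonoidHom.toMultiplicative ψ).comp Abelianization.of))
  rw [← Abelianization.ker_of, MonoidHom.mem_ker, ← ofMul_eq_zero, hzero]

theorem exists_char_ne_one [Nontrivial C] {n : ℕ}
    (hC : (⊤ : Subgroup C).lowerCentralSeries n = ⊥) (hCp : ∀ c : C, c ^ p = 1) :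
    ∃ (f : C →* Multiplicative (ZMod p)) (c : C), f c ≠ 1 := by
  obtain ⟨c, hc⟩ := SetLike.exists_not_mem_of_ne_top _
    (commutator_ne_top_of_lowerCentralSeries_eq_bot hC) rfl
  have hexp := Abelianization.pow_eq_one_of_closure_eq_top Subgroup.closure_univ
    fun c (_ : c ∈ Set.univ) => hCp c
  obtain ⟨f, hf⟩ := not_forall.1 ((mem_commutator_iff_forall_char hexp).not.1 hc)
  exact ⟨f, c, hf⟩

end Characters

/-- The Heisenberg group of upper unitriangular `3 × 3` matrices over `R`: `⟨x, y, z⟩` stands for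
`[[1, x, z], [0, 1, y], [0, 0, 1]]`. -/
@[ext]
structure Heisenberg (R : Type*) where
  x : R
  y : R
  z : R

namespace Heisenberg

variable {R : Type*} [CommRing R]

instance : Mul (Heisenberg R) := ⟨fun a b => ⟨a.x + b.x, a.y + b.y, a.z + b.z + a.x * b.y⟩⟩
instance : One (Heisenberg R) := ⟨⟨0, 0, 0⟩⟩
instance : Inv (Heisenberg R) := ⟨fun a => ⟨-a.x, -a.y, -a.z + a.x * a.y⟩⟩

@[simp] lemma mul_x (a b : Heisenberg R) : (a * b).x = a.x + b.x := rfl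
@[simp] lemma mul_y (a b : Heisenberg R) : (a * b).y = a.y + b.y := rfl
@[simp] lemma mul_z (a b : Heisenberg R) : (a * b).z = a.z + b.z + a.x * b.y := rfl
@[simp] lemma one_x : (1 : Heisenberg R).x = 0 := rfl
@[simp] lemma one_y : (1 : Heisenberg R).y = 0 := rfl
@[simp] lemma one_z : (1 : Heisenberg R).z = 0 := rfl
@[simp] lemma inv_x (a : Heisenberg R) : a⁻¹.x = -a.x := rfl
@[simp] lemma inv_y (a : Heisenberg R) : a⁻¹.y = -a.y := rfl
@[simp] lemma inv_z (a : Heisenberg R) : a⁻¹.z = -a.z + a.x * a.y := rfl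

instance : Group (Heisenberg R) where
  mul_assoc a b c := by ext <;> simp only [mul_x, mul_y, mul_z] <;> ring
  one_mul a := by ext <;> simp
  mul_one a := by ext <;> simp
  inv_mul_cancel a := by ext <;> simp

theorem commute_iff {a b : Heisenberg R} : Commute a b ↔ a.x * b.y = b.x * a.y := by
  refine ⟨fun h => ?_, fun h => ?_⟩
  · have hz := congrArg z h.eq
    simp only [mul_z] at hz
    linear_combination hz
  · ext
    · exact add_comm _ _
    · exact add_comm _ _
    · simp only [mul_z]
      linear_combination h

theorem lowerCentralSeries_two_eq_bot :
    (⊤ : Subgroup (Heisenberg R)).lowerCentralSeries 2 = ⊥ := by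
  refine commutator_le_center_iff.1 (Subgroup.commutator_le.2 fun a _ b _ => ?_)
  refine Subgroup.mem_center_iff.2 fun g => (commute_iff.2 ?_).eq
  simp [commutatorElement_def]

@[simps]
def fstHom : Heisenberg R →* Multiplicative R where
  toFun a := .ofAdd a.x
  map_one' := rfl
  map_mul' _ _ := rfl

@[simps]
def sndHom : Heisenberg R →* Multiplicative R where
  toFun a := .ofAdd a.y
  map_one' := rfl
  map_mul' _ _ := rfl

@[simps]
def inlHom : Multiplicative R →* Heisenberg R where
  toFun r := ⟨r.toAdd, 0, 0⟩
  map_one' := rfl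
  map_mul' _ _ := by ext <;> simp

@[simps]
def inrHom : Multiplicative R →* Heisenberg R where
  toFun r := ⟨0, r.toAdd, 0⟩
  map_one' := rfl
  map_mul' _ _ := by ext <;> simp

end Heisenberg

namespace amalgam

variable (A B : Type) [Group A] [Group B] (H : Subgroup A) (K : Subgroup B) (φ : H ≃* K)

def mk : Monoid.Coprod A B →* amalgam A B H K φ :=
  (QuotientGroup.mk' _).comp (QuotientGroup.mk' _)

theorem mk_surjective : Function.Surjective (mk A B H K φ) :=
  (QuotientGroup.mk'_surjective _).comp (QuotientGroup.mk'_surjective _)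

theorem mk_comp_inl : (mk A B H K φ).comp Monoid.Coprod.inl = amalgam.inl A B H K φ := rfl

theorem mk_comp_inr : (mk A B H K φ).comp Monoid.Coprod.inr = amalgam.inr A B H K φ := rfl

theorem lowerCentralSeries_two_eq_bot :
    (⊤ : Subgroup (amalgam A B H K φ)).lowerCentralSeries 2 = ⊥ :=
  lowerCentralSeries_eq_bot_of_surjective (mk_surjective A B H K φ) fun w hw => by
    simp only [MonoidHom.mem_ker, mk, MonoidHom.comp_apply, QuotientGroup.mk'_apply,
      (QuotientGroup.eq_one_iff w).2 hw, QuotientGroup.mk_one]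

theorem commutator_le_center :
    commutator (amalgam A B H K φ) ≤ Subgroup.center (amalgam A B H K φ) :=
  commutator_le_center_iff.2 (lowerCentralSeries_two_eq_bot A B H K φ)

theorem closure_range_inl_union_range_inr :
    Subgroup.closure (Set.range (amalgam.inl A B H K φ) ∪ Set.range (amalgam.inr A B H K φ)) =
      ⊤ := by
  rw [← mk_comp_inl, ← mk_comp_inr, MonoidHom.coe_comp, MonoidHom.coe_comp, Set.range_comp,
    Set.range_comp, ← Set.image_union, ← MonoidHom.map_closure,
    Monoid.Coprod.closure_range_inl_union_inr,
    Subgroup.map_top_of_surjective _ (mk_surjective A B H K φ)]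

variable {A B H K φ}

theorem hom_ext {P : Type*} [Monoid P] {f g : amalgam A B H K φ →* P}
    (h₁ : f.comp (amalgam.inl A B H K φ) = g.comp (amalgam.inl A B H K φ))
    (h₂ : f.comp (amalgam.inr A B H K φ) = g.comp (amalgam.inr A B H K φ)) : f = g :=
  QuotientGroup.monoidHom_ext _ <| QuotientGroup.monoidHom_ext _ <| Monoid.Coprod.hom_ext h₁ h₂

def lift {P : Type*} [Group P] (hP : (⊤ : Subgroup P).lowerCentralSeries 2 = ⊥)
    (f : A →* P) (g : B →* P) (hfg : ∀ h : H, f h = g (φ h)) : amalgam A B H K φ →* P :=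
  QuotientGroup.lift _
    (QuotientGroup.lift _ (Monoid.Coprod.lift f g) (lowerCentralSeries_le_ker hP _)) <| by
      refine Subgroup.normalClosure_le_normal ?_
      rintro _ ⟨h, rfl⟩
      rw [SetLike.mem_coe, MonoidHom.mem_ker, map_mul, map_inv, mul_inv_eq_one]
      exact hfg h

@[simp]
theorem lift_inl {P : Type*} [Group P] (hP : (⊤ : Subgroup P).lowerCentralSeries 2 = ⊥)
    (f : A →* P) (g : B →* P) (hfg : ∀ h : H, f h = g (φ h)) (a : A) :
    lift hP f g hfg (amalgam.inl A B H K φ a) = f a := rfl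

@[simp]
theorem lift_inr {P : Type*} [Group P] (hP : (⊤ : Subgroup P).lowerCentralSeries 2 = ⊥)
    (f : A →* P) (g : B →* P) (hfg : ∀ h : H, f h = g (φ h)) (b : B) :
    lift hP f g hfg (amalgam.inr A B H K φ b) = g b := rfl

section Heisenberg

variable {R : Type*} [CommRing R] (hH : H ≤ commutator A) (hK : K ≤ commutator B)

/-- Characters of `A` and `B` vanish on `H ≤ [A,A]` and `K ≤ [B,B]`, so they glue. -/
def toHeisenberg (f : A →* Multiplicative R) (g : B →* Multiplicative R) :
    amalgam A B H K φ →* Heisenberg R :=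
  lift Heisenberg.lowerCentralSeries_two_eq_bot (Heisenberg.inlHom.comp f)
    (Heisenberg.inrHom.comp g) fun h => by
      have hf : f h = 1 := Abelianization.commutator_subset_ker f (hH h.2)
      have hg : g (φ h) = 1 := Abelianization.commutator_subset_ker g (hK (φ h).2)
      rw [MonoidHom.comp_apply, MonoidHom.comp_apply, hf, hg, map_one, map_one]

theorem mul_fstHom_sndHom_toHeisenberg (χ : amalgam A B H K φ →* Multiplicative R)
    (f : A →* Multiplicative R) (g : B →* Multiplicative R) :
    Heisenberg.fstHom.comp (toHeisenberg hH hK (χ.comp (amalgam.inl A B H K φ)) g) *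
      Heisenberg.sndHom.comp (toHeisenberg hH hK f (χ.comp (amalgam.inr A B H K φ))) = χ := by
  refine hom_ext ?_ ?_ <;> ext <;> simp [toHeisenberg]

variable [NoZeroDivisors R] {ζ : amalgam A B H K φ}

theorem fstHom_toHeisenberg_eq_one_of_mem_center (hζ : ζ ∈ Subgroup.center _)
    (f : A →* Multiplicative R) {g : B →* Multiplicative R} {b : B} (hb : g b ≠ 1) :
    Heisenberg.fstHom (toHeisenberg hH hK f g ζ) = 1 := by
  have hcomm : Commute (toHeisenberg hH hK f g ζ)
      (toHeisenberg hH hK f g (amalgam.inr A B H K φ b)) :=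
    (show Commute _ _ from (Subgroup.mem_center_iff.1 hζ _).symm).map _
  simpa [toHeisenberg, Heisenberg.commute_iff, hb] using hcomm

theorem sndHom_toHeisenberg_eq_one_of_mem_center (hζ : ζ ∈ Subgroup.center _)
    {f : A →* Multiplicative R} {a : A} (ha : f a ≠ 1) (g : B →* Multiplicative R) :
    Heisenberg.sndHom (toHeisenberg hH hK f g ζ) = 1 := by
  have hcomm : Commute (toHeisenberg hH hK f g (amalgam.inl A B H K φ a))
      (toHeisenberg hH hK f g ζ) :=
    (show Commute _ _ from Subgroup.mem_center_iff.1 hζ _).map _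
  simpa [toHeisenberg, Heisenberg.commute_iff, ha] using hcomm

theorem char_eq_one_of_mem_center (hH : H ≤ commutator A) (hK : K ≤ commutator B)
    (hζ : ζ ∈ Subgroup.center _)
    {f : A →* Multiplicative R} {a : A} (ha : f a ≠ 1)
    {g : B →* Multiplicative R} {b : B} (hb : g b ≠ 1)
    (χ : amalgam A B H K φ →* Multiplicative R) : χ ζ = 1 := by
  rw [← mul_fstHom_sndHom_toHeisenberg hH hK χ f g, MonoidHom.mul_apply, MonoidHom.comp_apply,
    MonoidHom.comp_apply, fstHom_toHeisenberg_eq_one_of_mem_center hH hK hζ _ hb,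
    sndHom_toHeisenberg_eq_one_of_mem_center hH hK hζ ha, one_mul]

end Heisenberg

end amalgam

theorem stmt_9_general (p : ℕ) (hp : p.Prime)
    (A B : Type) [Group A] [Group B] [Nontrivial A] [Nontrivial B]
    (hA : (⊤ : Subgroup A).lowerCentralSeries 2 = ⊥) (hB : (⊤ : Subgroup B).lowerCentralSeries 2 = ⊥)
    (hAe : ∀ a : A, a ^ p = 1) (hBe : ∀ b : B, b ^ p = 1)
    (H : Subgroup A) (K : Subgroup B)
    (hH : H ≤ commutator A) (hK : K ≤ commutator B) (φ : H ≃* K) :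
    Subgroup.center (amalgam A B H K φ) = commutator (amalgam A B H K φ) := by
  have : Fact p.Prime := ⟨hp⟩
  refine le_antisymm (fun ζ hζ => ?_) (amalgam.commutator_le_center A B H K φ)
  have hexp : ∀ y : Abelianization (amalgam A B H K φ), y ^ p = 1 :=
    Abelianization.pow_eq_one_of_closure_eq_top (amalgam.closure_range_inl_union_range_inr ..)
      (by rintro _ (⟨a, rfl⟩ | ⟨b, rfl⟩) <;> rw [← map_pow] <;> simp [hAe, hBe])
  obtain ⟨f, a, ha⟩ := exists_char_ne_one hA hAe
  obtain ⟨g, b, hb⟩ := exists_char_ne_one hB hBe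
  exact (mem_commutator_iff_forall_char hexp).2
    (amalgam.char_eq_one_of_mem_center hH hK hζ ha hb)

/-- for nontrivial `A`, `B` of class at most 2 and odd prime
exponent `p`, the amalgamated coproduct `G` satisfies `Z(G) = [G,G]`. -/
theorem stmt_9 (p : ℕ) (hp : p.Prime) (hodd : Odd p)
    (A B : Type) [Group A] [Group B] [Nontrivial A] [Nontrivial B]
    (hA : (⊤ : Subgroup A).lowerCentralSeries 2 = ⊥) (hB : (⊤ : Subgroup B).lowerCentralSeries 2 = ⊥)
    (hAe : ∀ a : A, a ^ p = 1) (hBe : ∀ b : B, b ^ p = 1)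
    (H : Subgroup A) (K : Subgroup B)
    (hH : H ≤ commutator A) (hK : K ≤ commutator B) (φ : H ≃* K) :
    Subgroup.center (amalgam A B H K φ) = commutator (amalgam A B H K φ) :=
  stmt_9_general p hp A B hA hB hAe hBe H K hH hK φ
end

section
/- Let G be a nilpotent group of class at most 2 and odd prime exponent p that is a nontrivial direct product G = A × B with A, B nontrivial. Then G is capable if and only if each of A and B is either capable or nontrivial cyclic. -/
/-!
`G` is capable iff its epicentre `Z*(G)` is trivial; the nontrivial direction realizes `G` as
`E / Z(E)` for `E = F / [R, F]` built from a free presentation `G = F / R`.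

For characters `f, g : G → 𝔽_p`, the group `G × 𝔽_p` with cocycle `f x * g y` is a central
extension of `G` whose commutator form is `f x * g y - f y * g x`, so this form vanishes on
`Z*(G)`. In exponent `p` and class `2` this forces `Z*(G) ≤ G'` unless `G` is cyclic, and it
forces the `A`-component of `Z*(A × B)` into `A'` as soon as `B' ≠ B`. Conversely an element of
`Z*(A) ∩ A'` is central in every central extension of `A × B`: by the three subgroups lemma the
commutators of the preimage of `A` centralize the preimage of `B`. So `Z*(A × B) = 1` iff
`Z*(A) ∩ A' = 1` and `Z*(B) ∩ B' = 1`, i.e. iff each factor is capable or cyclic.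
-/

open Subgroup

section Epicenter

variable {G H : Type} [Group G] [Group H]

lemma mem_epicenter {z : G} :
    z ∈ epicenter G ↔ ∀ (E : Type) (_ : Group E) (ψ : E →* G), Function.Surjective ψ →
      ψ.ker ≤ center E → z ∈ (center E).map ψ := by
  simp [epicenter, mem_iInf]

lemma IsCapable.of_mulEquiv (h : IsCapable G) (e : G ≃* H) : IsCapable H :=
  let ⟨E, _, ⟨e'⟩⟩ := h
  ⟨E, _, ⟨e'.trans e⟩⟩

lemma MulEquiv.mem_epicenter_apply (e : G ≃* H) {z : G} (hz : z ∈ epicenter G) :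
    e z ∈ epicenter H := by
  rw [mem_epicenter] at hz ⊢
  intro E _ ψ hψ hker
  have hker' : (e.symm.toMonoidHom.comp ψ).ker ≤ center E := fun x hx =>
    hker (by simpa using congrArg e hx)
  obtain ⟨w, hw, hwz⟩ := hz E _ (e.symm.toMonoidHom.comp ψ) (e.symm.surjective.comp hψ) hker'
  exact ⟨w, hw, by simpa using congrArg e hwz⟩

lemma IsCapable.epicenter_eq_bot (h : IsCapable G) : epicenter G = ⊥ := by
  obtain ⟨E, _, ⟨e⟩⟩ := h
  refine eq_bot_iff.2 fun z hz => ?_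
  obtain ⟨w, hw, rfl⟩ := mem_epicenter.1 hz E _ (e.toMonoidHom.comp (QuotientGroup.mk' _))
    (e.surjective.comp (QuotientGroup.mk'_surjective _)) (by simp)
  simp [(QuotientGroup.eq_one_iff w).2 hw]

lemma map_center_le_center_of_surjective_comp {E₀ E : Type} [Group E₀] [Group E] {ψ : E →* G}
    (hker : ψ.ker ≤ center E) {φ : E₀ →* E} (hφ : Function.Surjective (ψ.comp φ)) :
    (center E₀).map φ ≤ center E := by
  rintro _ ⟨w, hw, rfl⟩
  refine mem_center_iff.2 fun e => ?_
  obtain ⟨x, hx⟩ := hφ (ψ e)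
  have hk : (φ x)⁻¹ * e ∈ center E := hker (by simp_all)
  have hxw : Commute x w := mem_center_iff.1 hw x
  have := (hxw.map φ).mul_left (mem_center_iff.1 hk (φ w)).symm
  rwa [mul_inv_cancel_left] at this

lemma ker_lift_commutator_ker_le_center {F : Type} [Group F] (π : F →* G) :
    (QuotientGroup.lift _ π (commutator_le_left π.ker ⊤)).ker ≤ center (F ⧸ ⁅π.ker, ⊤⁆) := by
  intro x hx
  induction x using QuotientGroup.induction_on with | _ f => ?_
  refine mem_center_iff.2 fun y => ?_
  induction y using QuotientGroup.induction_on with | _ g => ?_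
  have hf : f ∈ π.ker := by simpa using hx
  have hfg := (QuotientGroup.eq_one_iff _).2 (commutator_mem_commutator hf (mem_top g))
  rw [← QuotientGroup.mk'_apply, map_commutatorElement,
    commutatorElement_eq_one_iff_mul_comm] at hfg
  exact hfg.symm

/-- Maps from `F` lift along any central extension, and the lift kills `⁅ker π, F⁆`; so the centre
of `F/⁅ker π, F⁆` maps into the image of the centre of every central extension. -/
lemma map_center_le_epicenter_of_isFreeGroup (F : Type) [Group F] [IsFreeGroup F] (π : F →* G)
    (hπ : Function.Surjective π) :
    (center (F ⧸ ⁅π.ker, ⊤⁆)).map (QuotientGroup.lift _ π (commutator_le_left _ _)) ≤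
      epicenter G := by
  intro z hz
  rw [mem_epicenter]
  intro E _ ψ hψ hker
  set φ : F →* E := IsFreeGroup.lift fun x => Function.surjInv hψ (π (IsFreeGroup.of x))
  have hψφ : ψ.comp φ = π :=
    IsFreeGroup.ext_hom fun x => by simp [φ, Function.surjInv_eq hψ]
  have hφ : ⁅π.ker, ⊤⁆ ≤ φ.ker := by
    rw [commutator_le]
    intro r hr f _
    have hr' : φ r ∈ center E := hker (by rwa [MonoidHom.mem_ker, ← MonoidHom.comp_apply, hψφ])
    rw [MonoidHom.mem_ker, map_commutatorElement, commutatorElement_eq_one_iff_mul_comm]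
    exact (mem_center_iff.1 hr' _).symm
  set φ' := QuotientGroup.lift _ φ hφ
  have hψφ' : ψ.comp φ' = QuotientGroup.lift _ π (commutator_le_left _ _) := by
    ext x; simp [φ', ← hψφ]
  obtain ⟨w, hw, rfl⟩ := hz
  refine ⟨φ' w, map_center_le_center_of_surjective_comp hker ?_ ⟨w, hw, rfl⟩, ?_⟩
  · rw [hψφ']
    exact QuotientGroup.lift_surjective_of_surjective _ _ hπ _
  · exact DFunLike.congr_fun hψφ' w

lemma isCapable_iff_epicenter_eq_bot : IsCapable G ↔ epicenter G = ⊥ := by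
  refine ⟨IsCapable.epicenter_eq_bot, fun h => ?_⟩
  set π : FreeGroup G →* G := FreeGroup.lift id
  have hπ : Function.Surjective π := fun g => ⟨FreeGroup.of g, FreeGroup.lift_apply_of⟩
  set π' := QuotientGroup.lift _ π (commutator_le_left π.ker ⊤)
  have hπ' : Function.Surjective π' := QuotientGroup.lift_surjective_of_surjective _ _ hπ _
  have hcenter : center (FreeGroup G ⧸ ⁅π.ker, ⊤⁆) = π'.ker := by
    refine le_antisymm ?_ (ker_lift_commutator_ker_le_center π)
    rw [← Subgroup.map_eq_bot_iff, eq_bot_iff, ← h]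
    exact map_center_le_epicenter_of_isFreeGroup _ π hπ
  exact ⟨_, _, ⟨(QuotientGroup.quotientMulEquivOfEq hcenter).trans
    (QuotientGroup.quotientKerEquivOfSurjective π' hπ')⟩⟩

end Epicenter

section CentralExtension

variable {E G : Type} [Group E] [Group G]

lemma mem_center_of_mem_centralizer_of_sup_eq_top {H K : Subgroup E} (hHK : H ⊔ K = ⊤) {x : E}
    (hH : x ∈ centralizer H) (hK : x ∈ centralizer K) : x ∈ center E := by
  rw [← centralizer_univ, ← coe_top, ← hHK, sup_eq_closure, centralizer_closure]
  rw [mem_centralizer_iff] at hH hK ⊢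
  rintro y (hy | hy)
  exacts [hH y hy, hK y hy]

lemma commutator_comap_le_ker {ψ : E →* G} {H K : Subgroup G} (hHK : ⁅H, K⁆ = ⊥) :
    ⁅H.comap ψ, K.comap ψ⁆ ≤ ψ.ker := by
  rw [← Subgroup.map_eq_bot_iff, map_commutator, eq_bot_iff, ← hHK]
  exact commutator_mono (map_comap_le _ _) (map_comap_le _ _)

/-- The three subgroups lemma, applied to preimages in a central extension. -/
lemma commutator_comap_le_centralizer_comap {ψ : E →* G} (hker : ψ.ker ≤ center E)
    {H K : Subgroup G} (hHK : ⁅H, K⁆ = ⊥) :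
    ⁅H.comap ψ, H.comap ψ⁆ ≤ centralizer (K.comap ψ) := by
  have hcentral {H K : Subgroup G} (hHK : ⁅H, K⁆ = ⊥) (L : Subgroup E) :
      ⁅⁅H.comap ψ, K.comap ψ⁆, L⁆ = ⊥ :=
    commutator_eq_bot_iff_le_centralizer.2
      (((commutator_comap_le_ker hHK).trans hker).trans (center_le_centralizer _))
  rw [← commutator_eq_bot_iff_le_centralizer]
  exact commutator_commutator_eq_bot_of_rotate (hcentral hHK _)
    (hcentral ((commutator_comm K H).trans hHK) _)

end CentralExtension

/-- `G × R` with multiplication twisted by the bilinear 2-cocycle `(x, y) ↦ f x * g y`. -/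
@[ext]
structure BilinearExtension {G : Type} (R : Type) [Group G] [CommRing R]
    (f g : G →* Multiplicative R) where
  base : G
  fiber : R

namespace BilinearExtension

variable {G R : Type} [Group G] [CommRing R] {f g : G →* Multiplicative R}

instance : Mul (BilinearExtension R f g) :=
  ⟨fun a b => ⟨a.base * b.base, a.fiber + b.fiber + (f a.base).toAdd * (g b.base).toAdd⟩⟩

instance : One (BilinearExtension R f g) := ⟨⟨1, 0⟩⟩

instance : Inv (BilinearExtension R f g) :=
  ⟨fun a => ⟨a.base⁻¹, -a.fiber + (f a.base).toAdd * (g a.base).toAdd⟩⟩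

@[simp] lemma mul_base (a b : BilinearExtension R f g) : (a * b).base = a.base * b.base := rfl

@[simp] lemma mul_fiber (a b : BilinearExtension R f g) :
    (a * b).fiber = a.fiber + b.fiber + (f a.base).toAdd * (g b.base).toAdd := rfl

@[simp] lemma one_base : (1 : BilinearExtension R f g).base = 1 := rfl

@[simp] lemma one_fiber : (1 : BilinearExtension R f g).fiber = 0 := rfl

@[simp] lemma inv_base (a : BilinearExtension R f g) : a⁻¹.base = a.base⁻¹ := rfl

@[simp] lemma inv_fiber (a : BilinearExtension R f g) :
    a⁻¹.fiber = -a.fiber + (f a.base).toAdd * (g a.base).toAdd := rfl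

instance : Group (BilinearExtension R f g) where
  mul_assoc a b c := by ext <;> simp [mul_assoc]; ring
  one_mul a := by ext <;> simp
  mul_one a := by ext <;> simp
  inv_mul_cancel a := by ext <;> simp

def proj : BilinearExtension R f g →* G where
  toFun := base
  map_one' := rfl
  map_mul' _ _ := rfl

@[simp] lemma proj_apply (a : BilinearExtension R f g) : proj a = a.base := rfl

lemma proj_surjective : Function.Surjective (proj : BilinearExtension R f g →* G) :=
  fun x => ⟨⟨x, 0⟩, rfl⟩

lemma ker_proj_le_center : (proj : BilinearExtension R f g →* G).ker ≤ center _ := by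
  intro a ha
  have ha : a.base = 1 := ha
  refine mem_center_iff.2 fun b => ?_
  ext <;> simp [ha, add_comm]

end BilinearExtension

/-- `f z * g w - f w * g z` is the commutator of lifts of `w` and `z` to
`BilinearExtension R f g`. -/
lemma bilinear_symm_of_mem_epicenter {G R : Type} [Group G] [CommRing R] {z : G}
    (hz : z ∈ epicenter G) (f g : G →* Multiplicative R) (w : G) :
    (f z).toAdd * (g w).toAdd = (f w).toAdd * (g z).toAdd := by
  obtain ⟨e, he, rfl⟩ := mem_epicenter.1 hz _ _ _ BilinearExtension.proj_surjective
    (BilinearExtension.ker_proj_le_center (f := f) (g := g))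
  have := congrArg BilinearExtension.fiber (mem_center_iff.1 he ⟨w, 0⟩)
  simp only [BilinearExtension.mul_fiber] at this
  rw [BilinearExtension.proj_apply]
  linear_combination -this

section ClassTwo

variable {G : Type} [Group G]

lemma commutator_le_center_of_lowerCentralSeries_two_eq_bot
    (h : (⊤ : Subgroup G).lowerCentralSeries 2 = ⊥) : commutator G ≤ center G := by
  rwa [Subgroup.lowerCentralSeries_succ, top_lowerCentralSeries_one,
    commutator_eq_bot_iff_le_centralizer, coe_top, centralizer_univ] at h

lemma commutator_ne_top [Nontrivial G] (hG : commutator G ≤ center G) : commutator G ≠ ⊤ := by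
  intro htop
  have : IsMulCommutative G := center_eq_top_iff.1 (top_le_iff.1 (htop ▸ hG))
  exact bot_ne_top ((commutator_eq_bot G).symm.trans htop)

lemma isCyclic_of_commutator_sup_zpowers_eq_top (hG : commutator G ≤ center G) {z : G}
    (hz : commutator G ⊔ zpowers z = ⊤) : IsCyclic G := by
  have : IsCyclic (G ⧸ center G) := by
    refine isCyclic_iff_exists_zpowers_eq_top.2 ⟨QuotientGroup.mk' _ z, top_unique ?_⟩
    rw [← map_top_of_surjective _ (QuotientGroup.mk'_surjective (center G)), ← hz,
      Subgroup.map_sup, (Subgroup.map_eq_bot_iff _).2 (hG.trans (QuotientGroup.ker_mk' _).ge),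
      bot_sup_eq, MonoidHom.map_zpowers]
  have := (QuotientGroup.mk' (center G)).isMulCommutative_of_isCyclic_of_ker_le_center (by simp)
  rw [commutator_eq_bot, bot_sup_eq] at hz
  exact isCyclic_iff_exists_zpowers_eq_top.2 ⟨z, hz⟩

variable {p : ℕ} [Fact p.Prime]

/-- The quotient of the abelianization by the image of `H` is an `𝔽_p`-vector space, so a linear
functional separates `z` from it. -/
lemma exists_monoidHom_zmod_of_notMem (hexp : ∀ x : G, x ^ p = 1) {H : Subgroup G}
    (hH : commutator G ≤ H) {z : G} (hz : z ∉ H) :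
    ∃ χ : G →* Multiplicative (ZMod p), H ≤ χ.ker ∧ χ z ≠ 1 := by
  have hexpA (a : Abelianization G) : a ^ p = 1 :=
    QuotientGroup.induction_on a fun y => by
      change Abelianization.of y ^ p = 1
      rw [← map_pow, hexp, map_one]
  have hexpV (x : Additive (Abelianization G)) : p • x = 0 := hexpA x.toMul
  have : Module (ZMod p) (Additive (Abelianization G)) := AddCommGroup.zmodModule hexpV
  set W : Submodule (ZMod p) (Additive (Abelianization G)) :=
    AddSubgroup.toZModSubmodule p (toAddSubgroup (H.map Abelianization.of))
  have hzW : (Additive.ofMul (Abelianization.of z) : Additive (Abelianization G)) ∉ W := by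
    intro hzW
    simp only [W, AddSubgroup.mem_toZModSubmodule] at hzW
    obtain ⟨h, hh, hhz⟩ : Abelianization.of z ∈ H.map Abelianization.of := hzW
    have : h⁻¹ * z ∈ H := hH (QuotientGroup.eq.1 hhz)
    exact hz (by simpa using mul_mem hh this)
  obtain ⟨φ, hφz, hφW⟩ := W.exists_dual_map_eq_bot_of_notMem hzW inferInstance
  refine ⟨(AddMonoidHom.toMultiplicativeRight φ.toAddMonoidHom).comp Abelianization.of,
    fun h hh => ?_, by simpa using hφz⟩
  have : φ (Additive.ofMul (Abelianization.of h)) ∈ W.map φ := ⟨_, ⟨h, hh, rfl⟩, rfl⟩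
  simpa [hφW] using this

lemma epicenter_le_commutator (hexp : ∀ x : G, x ^ p = 1) (hG : commutator G ≤ center G)
    (hcyc : ¬IsCyclic G) : epicenter G ≤ commutator G := by
  intro z hz
  by_contra hz'
  obtain ⟨w, hw⟩ : ∃ w, w ∉ commutator G ⊔ zpowers z := by
    by_contra! h
    exact hcyc (isCyclic_of_commutator_sup_zpowers_eq_top hG (eq_top_iff.2 fun w _ => h w))
  obtain ⟨χ, -, hχz⟩ := exists_monoidHom_zmod_of_notMem hexp le_rfl hz'
  obtain ⟨ξ, hξ, hξw⟩ := exists_monoidHom_zmod_of_notMem hexp le_sup_left hw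
  have := bilinear_symm_of_mem_epicenter hz χ ξ w
  rw [hξ (mem_sup_right (mem_zpowers z)), toAdd_one, mul_zero] at this
  simp_all

end ClassTwo

section Products

variable {A B : Type} [Group A] [Group B]

lemma commutator_le_center_of_prod (h : commutator (A × B) ≤ center (A × B)) :
    commutator A ≤ center A ∧ commutator B ≤ center B := by
  rw [_root_.commutator_def, ← top_prod_top, commutator_prod_prod, Subgroup.center_prod] at h
  exact ⟨fun a ha => (h (x := (a, 1)) ⟨ha, one_mem _⟩).1,
    fun b hb => (h (x := (1, b)) ⟨one_mem _, hb⟩).2⟩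

lemma top_prod_bot_sup_bot_prod_top :
    (⊤ : Subgroup A).prod (⊥ : Subgroup B) ⊔ (⊥ : Subgroup A).prod ⊤ = ⊤ := by
  refine eq_top_iff.2 fun x _ => ?_
  rw [← Prod.fst_mul_snd x]
  exact mul_mem_sup (by simp [mem_prod]) (by simp [mem_prod])

lemma fst_mem_epicenter_of_mem_epicenter_prod {x : A × B} (hx : x ∈ epicenter (A × B)) :
    x.1 ∈ epicenter A := by
  rw [mem_epicenter] at hx ⊢
  intro E _ ψ hψ hker
  have hker' : (ψ.prodMap (MonoidHom.id B)).ker ≤ center (E × B) := by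
    intro y hy
    rw [MonoidHom.mem_ker, Prod.ext_iff] at hy
    rw [Subgroup.center_prod]
    exact ⟨hker hy.1, by simp [show y.2 = 1 from hy.2]⟩
  obtain ⟨w, hw, rfl⟩ := hx (E × B) _ _ (hψ.prodMap Function.surjective_id) hker'
  rw [Subgroup.center_prod] at hw
  exact ⟨w.1, hw.1, rfl⟩

lemma mk_one_mem_epicenter_prod {a : A} (ha : a ∈ epicenter A) (ha' : a ∈ commutator A) :
    ((a, 1) : A × B) ∈ epicenter (A × B) := by
  rw [mem_epicenter]
  intro E _ ψ hψ hker
  set EA := ((⊤ : Subgroup A).prod (⊥ : Subgroup B)).comap ψ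
  set EB := ((⊥ : Subgroup A).prod (⊤ : Subgroup B)).comap ψ
  have hsurj : Function.Surjective ((MonoidHom.fst A B).comp (ψ.comp EA.subtype)) := by
    intro a
    obtain ⟨e, he⟩ := hψ (a, 1)
    exact ⟨⟨e, by simp [EA, mem_prod, he]⟩, by simp [he]⟩
  have hker' : ((MonoidHom.fst A B).comp (ψ.comp EA.subtype)).ker ≤ center EA := by
    intro x hx
    have : (x : E) ∈ center E := hker (Prod.ext hx (mem_bot.1 (mem_prod.1 x.2).2))
    exact mem_center_iff.2 fun y => Subtype.ext (mem_center_iff.1 this y)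
  obtain ⟨e, he, hea⟩ := mem_epicenter.1 ha EA _ _ hsurj hker'
  have hψe : ψ e = (a, 1) := Prod.ext hea (mem_bot.1 (mem_prod.1 e.2).2)
  have heA : (e : E) ∈ centralizer EA :=
    mem_centralizer_iff.2 fun y hy => congrArg Subtype.val (mem_center_iff.1 he ⟨y, hy⟩)
  -- modulo the central kernel of `ψ`, `e` is a commutator of `EA`
  have heB : (e : E) ∈ centralizer EB := by
    obtain ⟨c, hc, hce⟩ : (a, 1) ∈ ⁅EA, EA⁆.map ψ := by
      rw [map_commutator, map_comap_eq_self_of_surjective hψ, commutator_prod_prod]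
      exact ⟨by rwa [← _root_.commutator_def], by simp⟩
    have hk : c⁻¹ * e ∈ center E := hker (by simp [hce, hψe])
    rw [← mul_inv_cancel_left c (e : E)]
    refine mul_mem (commutator_comap_le_centralizer_comap hker ?_ hc) (center_le_centralizer _ hk)
    rw [commutator_prod_prod, commutator_bot_right, commutator_bot_left, bot_prod_bot]
  refine ⟨e, mem_center_of_mem_centralizer_of_sup_eq_top ?_ heA heB, hψe⟩
  rw [comap_sup_eq ψ _ _ hψ, top_prod_bot_sup_bot_prod_top, comap_top]

variable {p : ℕ} [Fact p.Prime]

lemma fst_mem_commutator_of_mem_epicenter_prod (hexpA : ∀ x : A, x ^ p = 1)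
    (hexpB : ∀ x : B, x ^ p = 1) (hB : commutator B ≠ ⊤) {x : A × B}
    (hx : x ∈ epicenter (A × B)) : x.1 ∈ commutator A := by
  by_contra hx'
  obtain ⟨b, hb⟩ := SetLike.exists_not_mem_of_ne_top _ hB rfl
  obtain ⟨χ, -, hχ⟩ := exists_monoidHom_zmod_of_notMem hexpA le_rfl hx'
  obtain ⟨ξ, -, hξ⟩ := exists_monoidHom_zmod_of_notMem hexpB le_rfl hb
  have := bilinear_symm_of_mem_epicenter hx (χ.comp (MonoidHom.fst A B))
    (ξ.comp (MonoidHom.snd A B)) (1, b)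
  simp_all

lemma IsCapable.isCapable_or_isCyclic_fst (h : IsCapable (A × B)) (hexp : ∀ x : A, x ^ p = 1)
    (hA : commutator A ≤ center A) : IsCapable A ∨ IsCyclic A := by
  refine or_iff_not_imp_right.2 fun hcyc =>
    isCapable_iff_epicenter_eq_bot.2 (eq_bot_iff.2 fun a ha => ?_)
  have := mk_one_mem_epicenter_prod (B := B) ha (epicenter_le_commutator hexp hA hcyc ha)
  rw [h.epicenter_eq_bot, mem_bot, Prod.mk_eq_one] at this
  exact mem_bot.2 this.1

lemma fst_eq_one_of_mem_epicenter_prod (hexpA : ∀ x : A, x ^ p = 1)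
    (hexpB : ∀ x : B, x ^ p = 1) (hB : commutator B ≠ ⊤) (hA : IsCapable A ∨ IsCyclic A)
    {x : A × B} (hx : x ∈ epicenter (A × B)) : x.1 = 1 := by
  rw [← mem_bot]
  rcases hA with hA | hA
  · exact hA.epicenter_eq_bot ▸ fst_mem_epicenter_of_mem_epicenter_prod hx
  · exact commutator_eq_bot A ▸ fst_mem_commutator_of_mem_epicenter_prod hexpA hexpB hB hx

end Products

theorem stmt_13_general (p : ℕ) (hp : p.Prime)
    (A B : Type) [Group A] [Group B] [Nontrivial A] [Nontrivial B]
    (h2 : (⊤ : Subgroup (A × B)).lowerCentralSeries 2 = ⊥) (hexp : ∀ g : A × B, g ^ p = 1) :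
    IsCapable (A × B) ↔
      (IsCapable A ∨ (IsCyclic A ∧ Nontrivial A)) ∧
      (IsCapable B ∨ (IsCyclic B ∧ Nontrivial B)) := by
  have : Fact p.Prime := ⟨hp⟩
  have hexpA (x : A) : x ^ p = 1 := by simpa using congrArg Prod.fst (hexp (x, 1))
  have hexpB (x : B) : x ^ p = 1 := by simpa using congrArg Prod.snd (hexp (1, x))
  obtain ⟨hA, hB⟩ := commutator_le_center_of_prod
    (commutator_le_center_of_lowerCentralSeries_two_eq_bot h2)
  constructor
  · intro h
    exact ⟨(h.isCapable_or_isCyclic_fst hexpA hA).imp_right (⟨·, ‹_›⟩),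
      ((h.of_mulEquiv MulEquiv.prodComm).isCapable_or_isCyclic_fst hexpB hB).imp_right
        (⟨·, ‹_›⟩)⟩
  · rintro ⟨hA', hB'⟩
    refine isCapable_iff_epicenter_eq_bot.2 (eq_bot_iff.2 fun x hx => Prod.ext ?_ ?_)
    · exact fst_eq_one_of_mem_epicenter_prod hexpA hexpB (commutator_ne_top hB)
        (hA'.imp_right And.left) hx
    · exact fst_eq_one_of_mem_epicenter_prod hexpB hexpA (commutator_ne_top hA)
        (hB'.imp_right And.left) (MulEquiv.prodComm.mem_epicenter_apply hx)

/-- a nontrivial direct product of class at most 2 and odd prime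
exponent `p` is capable iff each factor is capable or nontrivial cyclic. -/
theorem stmt_13 (p : ℕ) (hp : p.Prime) (hodd : Odd p)
    (A B : Type) [Group A] [Group B] [Nontrivial A] [Nontrivial B]
    (h2 : (⊤ : Subgroup (A × B)).lowerCentralSeries 2 = ⊥) (hexp : ∀ g : A × B, g ^ p = 1) :
    IsCapable (A × B) ↔
      (IsCapable A ∨ (IsCyclic A ∧ Nontrivial A)) ∧
      (IsCapable B ∨ (IsCyclic B ∧ Nontrivial B)) :=
  stmt_13_general p hp A B h2 hexp
end
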